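/- Let m : I → ℝ³ be a C^4 arc-length parametrized curve with curvature κ and torsion τ, m̄ its light-cone lift in ℝ₁^5, and γ = m̄ ∧ m̄' ∧ m̄'' the curve of osculating circles. Then ⟨γ''(s), γ''(s)⟩ = κ'(s)² + κ(s)²τ(s)². In particular the 1/2-dimensional length element |⟨γ'',γ''⟩|^{1/4} ds equals the conformal arc-length element (κ'² + κ²τ²)^{1/4} ds. -/

import Mathlib

/-- The Minkowski form on ℝ₁⁵. -/
noncomputable def mink (x y : Fin 5 → ℝ) : ℝ :=
  -(x 0 * y 0) + x 1 * y 1 + x 2 * y 2 + x 3 * y 3 + x 4 * y 4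

/-- The lift m̄(x) = (1 + (x·x)/4, -1 + (x·x)/4, x) of ℝ³ into the light cone of ℝ₁⁵. -/
noncomputable def mbar (x : Fin 3 → ℝ) : Fin 5 → ℝ :=
  Fin.cons (1 + (∑ i, x i * x i) / 4) (Fin.cons (-1 + (∑ i, x i * x i) / 4) x)

/-- Plücker coordinate p_{i₁i₂i₃} of the 3-vector x₁∧x₂∧x₃. -/
noncomputable def plucker (x₁ x₂ x₃ : Fin 5 → ℝ) (i₁ i₂ i₃ : Fin 5) : ℝ :=
  Matrix.det (Matrix.of fun a b : Fin 3 => ![x₁, x₂, x₃] a (![i₁, i₂, i₃] b))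

/-- The Plücker coordinates of the curve of osculating circles γ = m̄ ∧ m̄' ∧ m̄''. -/
noncomputable def gammaCoord (m : ℝ → Fin 3 → ℝ) (s : ℝ) (i₁ i₂ i₃ : Fin 5) : ℝ :=
  plucker (mbar (m s)) (deriv (fun t => mbar (m t)) s)
    (iteratedDeriv 2 (fun t => mbar (m t)) s) i₁ i₂ i₃

/-!
Write `F = m̄ ∘ m`. Since the Plücker coordinates are trilinear and alternating,
`γ' = F ∧ F' ∧ F'''` and `γ'' = F ∧ F'' ∧ F''' + F ∧ F' ∧ F''''`. By Cauchy–Binet the pairing of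
two decomposable 3-vectors is minus the Gram determinant of the Minkowski form, so `⟨γ'', γ''⟩`
only involves the products `⟨F⁽ʲ⁾, F⁽ᵏ⁾⟩`. For `j, k ≥ 1` these equal `m⁽ʲ⁾ · m⁽ᵏ⁾`, because the
first two coordinates of `m̄` differ by a constant; the products `⟨F, F⁽ᵏ⁾⟩` follow by repeatedly
differentiating `⟨F, F⟩ = 0` and `|m'|² = 1`. The result is `|m'''|² - κ⁴ = κ'² + κ²τ²`.
-/

theorem ContinuousLinearMap.iteratedDeriv_comp_left {𝕜 E F : Type*} [NontriviallyNormedField 𝕜]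
    [NormedAddCommGroup E] [NormedSpace 𝕜 E] [NormedAddCommGroup F] [NormedSpace 𝕜 F]
    (g : E →L[𝕜] F) {f : 𝕜 → E} {n : WithTop ℕ∞} {x : 𝕜} (hf : ContDiffAt 𝕜 n f x) {k : ℕ}
    (hk : k ≤ n) : iteratedDeriv k (g ∘ f) x = g (iteratedDeriv k f x) := by
  simp [iteratedDeriv_eq_iteratedFDeriv, g.iteratedFDeriv_comp_left hf hk]

theorem iteratedDeriv_apply {𝕜 ι E : Type*} [NontriviallyNormedField 𝕜] [Fintype ι]
    [NormedAddCommGroup E] [NormedSpace 𝕜 E] {f : 𝕜 → ι → E} {n : WithTop ℕ∞} {x : 𝕜}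
    (hf : ContDiffAt 𝕜 n f x) {k : ℕ} (hk : k ≤ n) (i : ι) :
    iteratedDeriv k f x i = iteratedDeriv k (fun t => f t i) x :=
  ((ContinuousLinearMap.proj i).iteratedDeriv_comp_left hf hk).symm

theorem ContDiff.hasDerivAt_iteratedDeriv {𝕜 E : Type*} [NontriviallyNormedField 𝕜]
    [NormedAddCommGroup E] [NormedSpace 𝕜 E] {f : 𝕜 → E} {n : WithTop ℕ∞} (hf : ContDiff 𝕜 n f)
    {k : ℕ} (hk : k < n) (x : 𝕜) :
    HasDerivAt (iteratedDeriv k f) (iteratedDeriv (k + 1) f x) x := by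
  rw [iteratedDeriv_succ]
  exact (hf.differentiable_iteratedDeriv k hk x).hasDerivAt

theorem mink_comm (x y : Fin 5 → ℝ) : mink x y = mink y x := by
  unfold mink; ring

theorem HasDerivAt.mink {f g : ℝ → Fin 5 → ℝ} {f' g' : Fin 5 → ℝ} {t : ℝ}
    (hf : HasDerivAt f f' t) (hg : HasDerivAt g g' t) :
    HasDerivAt (fun t => mink (f t) (g t)) (mink f' (g t) + mink (f t) g') t := by
  have hfi := hasDerivAt_pi.1 hf
  have hgi := hasDerivAt_pi.1 hg
  unfold _root_.mink
  refine ((((((hfi 0).fun_mul (hgi 0)).fun_neg.fun_add ((hfi 1).fun_mul (hgi 1))).fun_add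
    ((hfi 2).fun_mul (hgi 2))).fun_add ((hfi 3).fun_mul (hgi 3))).fun_add
    ((hfi 4).fun_mul (hgi 4))).congr_deriv ?_
  ring

theorem plucker_eq (x₁ x₂ x₃ : Fin 5 → ℝ) (i₁ i₂ i₃ : Fin 5) :
    plucker x₁ x₂ x₃ i₁ i₂ i₃
      = x₁ i₁ * (x₂ i₂ * x₃ i₃ - x₂ i₃ * x₃ i₂)
      - x₂ i₁ * (x₁ i₂ * x₃ i₃ - x₁ i₃ * x₃ i₂)
      + x₃ i₁ * (x₁ i₂ * x₂ i₃ - x₁ i₃ * x₂ i₂) := by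
  simp only [plucker, Matrix.det_fin_three, Matrix.of_apply, Matrix.cons_val_zero,
    Matrix.cons_val_one, Matrix.cons_val_two, Matrix.head_cons, Matrix.tail_cons]
  ring

theorem plucker_self_left (x y : Fin 5 → ℝ) (i₁ i₂ i₃ : Fin 5) : plucker x x y i₁ i₂ i₃ = 0 := by
  rw [plucker_eq]; ring

theorem plucker_self_right (x y : Fin 5 → ℝ) (i₁ i₂ i₃ : Fin 5) : plucker x y y i₁ i₂ i₃ = 0 := by
  rw [plucker_eq]; ring

theorem HasDerivAt.plucker {f g h : ℝ → Fin 5 → ℝ} {f' g' h' : Fin 5 → ℝ} {t : ℝ}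
    (hf : HasDerivAt f f' t) (hg : HasDerivAt g g' t) (hh : HasDerivAt h h' t)
    (i₁ i₂ i₃ : Fin 5) :
    HasDerivAt (fun t => plucker (f t) (g t) (h t) i₁ i₂ i₃)
      (plucker f' (g t) (h t) i₁ i₂ i₃ + plucker (f t) g' (h t) i₁ i₂ i₃
        + plucker (f t) (g t) h' i₁ i₂ i₃) t := by
  have hf := hasDerivAt_pi.1 hf
  have hg := hasDerivAt_pi.1 hg
  have hh := hasDerivAt_pi.1 hh
  simp only [plucker_eq]
  refine ((((hf i₁).fun_mul (((hg i₂).fun_mul (hh i₃)).fun_sub ((hg i₃).fun_mul (hh i₂)))).fun_sub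
    ((hg i₁).fun_mul (((hf i₂).fun_mul (hh i₃)).fun_sub ((hf i₃).fun_mul (hh i₂))))).fun_add
    ((hh i₁).fun_mul (((hf i₂).fun_mul (hg i₃)).fun_sub ((hf i₃).fun_mul (hg i₂))))).congr_deriv ?_
  ring

noncomputable def pluckerPairing (P Q : Fin 5 → Fin 5 → Fin 5 → ℝ) : ℝ :=
  ∑ i₁ : Fin 5, ∑ i₂ : Fin 5, ∑ i₃ : Fin 5,
    if i₁ < i₂ ∧ i₂ < i₃ then (if i₁ = 0 then (1 : ℝ) else -1) * (P i₁ i₂ i₃ * Q i₁ i₂ i₃) else 0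

theorem pluckerPairing_eq (P Q : Fin 5 → Fin 5 → Fin 5 → ℝ) :
    pluckerPairing P Q
      = P 0 1 2 * Q 0 1 2 + P 0 1 3 * Q 0 1 3 + P 0 1 4 * Q 0 1 4 + P 0 2 3 * Q 0 2 3
        + P 0 2 4 * Q 0 2 4 + P 0 3 4 * Q 0 3 4 - P 1 2 3 * Q 1 2 3 - P 1 2 4 * Q 1 2 4
        - P 1 3 4 * Q 1 3 4 - P 2 3 4 * Q 2 3 4 := by
  simp only [pluckerPairing, Fin.sum_univ_five]
  simp +decide only [ite_true, ite_false]
  ring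

theorem pluckerPairing_add_self (P Q : Fin 5 → Fin 5 → Fin 5 → ℝ) :
    pluckerPairing (P + Q) (P + Q)
      = pluckerPairing P P + 2 * pluckerPairing P Q + pluckerPairing Q Q := by
  simp only [pluckerPairing_eq, Pi.add_apply]
  ring

theorem pluckerPairing_plucker (x₁ x₂ x₃ y₁ y₂ y₃ : Fin 5 → ℝ) :
    pluckerPairing (plucker x₁ x₂ x₃) (plucker y₁ y₂ y₃)
      = -(Matrix.of fun a b => mink (![x₁, x₂, x₃] a) (![y₁, y₂, y₃] b)).det := by
  rw [pluckerPairing_eq, Matrix.det_fin_three]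
  simp only [plucker_eq, Matrix.of_apply, Matrix.cons_val_zero, Matrix.cons_val_one,
    Matrix.cons_val_two, Matrix.head_cons, Matrix.tail_cons, mink]
  ring

theorem mink_iteratedDeriv_succ_add_eq_zero {F : ℝ → Fin 5 → ℝ} {n : WithTop ℕ∞}
    (hF : ContDiff ℝ n F) {j k : ℕ} (hj : j < n) (hk : k < n) {c : ℝ}
    (hc : ∀ t, mink (iteratedDeriv j F t) (iteratedDeriv k F t) = c) (t : ℝ) :
    mink (iteratedDeriv (j + 1) F t) (iteratedDeriv k F t)
      + mink (iteratedDeriv j F t) (iteratedDeriv (k + 1) F t) = 0 := by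
  have hconst : (fun t => mink (iteratedDeriv j F t) (iteratedDeriv k F t)) = fun _ => c :=
    funext hc
  have hderiv := (hF.hasDerivAt_iteratedDeriv hj t).mink (hF.hasDerivAt_iteratedDeriv hk t)
  rw [hconst] at hderiv
  exact (hasDerivAt_const t c).unique hderiv |>.symm

theorem iteratedDeriv_two_plucker_osculating {F : ℝ → Fin 5 → ℝ} (hF : ContDiff ℝ 4 F)
    (i₁ i₂ i₃ : Fin 5) (s : ℝ) :
    iteratedDeriv 2 (fun t => plucker (F t) (deriv F t) (iteratedDeriv 2 F t) i₁ i₂ i₃) s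
      = plucker (F s) (iteratedDeriv 2 F s) (iteratedDeriv 3 F s) i₁ i₂ i₃
        + plucker (F s) (deriv F s) (iteratedDeriv 4 F s) i₁ i₂ i₃ := by
  have hd : ∀ k < 4, ∀ t, HasDerivAt (iteratedDeriv k F) (iteratedDeriv (k + 1) F t) t :=
    fun k hk => hF.hasDerivAt_iteratedDeriv (by exact_mod_cast hk)
  have h0 := hd 0 (by norm_num)
  have h1 := hd 1 (by norm_num)
  simp only [iteratedDeriv_zero, zero_add, iteratedDeriv_one] at h0 h1
  have hγ' : ∀ t, HasDerivAt
      (fun t => plucker (F t) (deriv F t) (iteratedDeriv 2 F t) i₁ i₂ i₃)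
      (plucker (F t) (deriv F t) (iteratedDeriv 3 F t) i₁ i₂ i₃) t := by
    intro t
    refine ((h0 t).plucker (h1 t) (hd 2 (by norm_num) t) i₁ i₂ i₃).congr_deriv ?_
    rw [plucker_self_left, plucker_self_right]
    ring
  have hγ'' := (h0 s).plucker (h1 s) (hd 3 (by norm_num) s) i₁ i₂ i₃
  rw [iteratedDeriv_succ, iteratedDeriv_one, funext fun t => (hγ' t).deriv, hγ''.deriv,
    plucker_self_left, zero_add]

-- `xᵢ` stands for the `i`-th derivative of the lift; these are the only Gram entries that survive
-- in the three determinants.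
theorem pluckerPairing_osculating {x₀ x₁ x₂ x₃ x₄ : Fin 5 → ℝ} {k T : ℝ}
    (h₀₀ : mink x₀ x₀ = 0) (h₀₁ : mink x₀ x₁ = 0) (h₀₂ : mink x₀ x₂ = -1) (h₀₃ : mink x₀ x₃ = 0)
    (h₀₄ : mink x₀ x₄ = k) (h₁₁ : mink x₁ x₁ = 1) (h₁₃ : mink x₁ x₃ = -k)
    (h₃₃ : mink x₃ x₃ = T) :
    pluckerPairing (plucker x₀ x₂ x₃ + plucker x₀ x₁ x₄) (plucker x₀ x₂ x₃ + plucker x₀ x₁ x₄)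
      = T - k ^ 2 := by
  rw [pluckerPairing_add_self, pluckerPairing_plucker, pluckerPairing_plucker,
    pluckerPairing_plucker]
  simp only [Matrix.det_fin_three, Matrix.of_apply, Matrix.cons_val_zero, Matrix.cons_val_one,
    Matrix.cons_val_two, Matrix.head_cons, Matrix.tail_cons]
  rw [mink_comm x₁ x₀, mink_comm x₂ x₀, mink_comm x₃ x₀, mink_comm x₄ x₀, mink_comm x₃ x₁]
  simp only [h₀₀, h₀₁, h₀₂, h₀₃, h₀₄, h₁₁, h₁₃, h₃₃]
  ring

theorem mink_eq_neg_add_add_dotProduct (x y : Fin 5 → ℝ) :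
    mink x y = -(x 0 * y 0) + x 1 * y 1
      + (fun i : Fin 3 => x i.succ.succ) ⬝ᵥ (fun i => y i.succ.succ) := by
  simp [mink, dotProduct, Fin.sum_univ_three, add_assoc]

theorem mbar_apply_zero (x : Fin 3 → ℝ) : mbar x 0 = 1 + (x ⬝ᵥ x) / 4 := rfl

theorem mbar_apply_one (x : Fin 3 → ℝ) : mbar x 1 = -1 + (x ⬝ᵥ x) / 4 := rfl

theorem mbar_apply_succ_succ (x : Fin 3 → ℝ) (i : Fin 3) : mbar x i.succ.succ = x i := rfl

theorem mink_mbar_self (x : Fin 3 → ℝ) : mink (mbar x) (mbar x) = 0 := by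
  simp only [mink_eq_neg_add_add_dotProduct, mbar_apply_zero, mbar_apply_one,
    mbar_apply_succ_succ]
  ring

theorem contDiff_mbar {n : WithTop ℕ∞} : ContDiff ℝ n mbar := by
  refine contDiff_pi.2 fun i => ?_
  refine Fin.cases ?_ (fun i => Fin.cases ?_ (fun j => ?_) i) i <;>
    simp only [mbar, Fin.cons_zero, Fin.cons_succ] <;> fun_prop

section LightConeLift

variable {m : ℝ → Fin 3 → ℝ} {n : WithTop ℕ∞} {j k : ℕ}

theorem ContDiff.mbar (hm : ContDiff ℝ n m) : ContDiff ℝ n (fun t => mbar (m t)) :=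
  contDiff_mbar.comp hm

theorem iteratedDeriv_mbar_comp_apply_zero (hm : ContDiff ℝ n m) (hk₀ : k ≠ 0) (hk : k ≤ n)
    (t : ℝ) :
    iteratedDeriv k (fun t => mbar (m t)) t 0 = iteratedDeriv k (fun t => mbar (m t)) t 1 := by
  have hshift : (fun t => mbar (m t) 0) = fun t => 2 + mbar (m t) 1 := by
    funext t
    rw [mbar_apply_zero, mbar_apply_one]
    ring
  rw [iteratedDeriv_apply hm.mbar.contDiffAt hk, iteratedDeriv_apply hm.mbar.contDiffAt hk, hshift,
    iteratedDeriv_const_add (Nat.pos_of_ne_zero hk₀)]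

theorem iteratedDeriv_mbar_comp_apply_succ_succ (hm : ContDiff ℝ n m) (hk : k ≤ n) (t : ℝ)
    (i : Fin 3) : iteratedDeriv k (fun t => mbar (m t)) t i.succ.succ = iteratedDeriv k m t i := by
  rw [iteratedDeriv_apply hm.mbar.contDiffAt hk,
    iteratedDeriv_apply hm.contDiffAt hk]
  rfl

theorem mink_iteratedDeriv_mbar_comp (hm : ContDiff ℝ n m) (hj₀ : j ≠ 0) (hk₀ : k ≠ 0)
    (hj : j ≤ n) (hk : k ≤ n) (t : ℝ) :
    mink (iteratedDeriv j (fun t => mbar (m t)) t) (iteratedDeriv k (fun t => mbar (m t)) t)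
      = iteratedDeriv j m t ⬝ᵥ iteratedDeriv k m t := by
  rw [mink_eq_neg_add_add_dotProduct, iteratedDeriv_mbar_comp_apply_zero hm hj₀ hj,
    iteratedDeriv_mbar_comp_apply_zero hm hk₀ hk]
  simp only [iteratedDeriv_mbar_comp_apply_succ_succ hm hj,
    iteratedDeriv_mbar_comp_apply_succ_succ hm hk]
  ring

theorem mink_iteratedDeriv_one_one_mbar_comp (hm : ContDiff ℝ 4 m)
    (harc : ∀ s, deriv m s ⬝ᵥ deriv m s = 1) (t : ℝ) :
    mink (iteratedDeriv 1 (fun t => mbar (m t)) t) (iteratedDeriv 1 (fun t => mbar (m t)) t)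
      = 1 := by
  rw [mink_iteratedDeriv_mbar_comp hm one_ne_zero one_ne_zero (by norm_num) (by norm_num),
    iteratedDeriv_one, harc]

theorem mink_iteratedDeriv_one_two_mbar_comp (hm : ContDiff ℝ 4 m)
    (harc : ∀ s, deriv m s ⬝ᵥ deriv m s = 1) (t : ℝ) :
    mink (iteratedDeriv 1 (fun t => mbar (m t)) t) (iteratedDeriv 2 (fun t => mbar (m t)) t)
      = 0 := by
  have h := mink_iteratedDeriv_succ_add_eq_zero hm.mbar (by norm_num) (by norm_num)
    (mink_iteratedDeriv_one_one_mbar_comp hm harc) t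
  rw [mink_comm] at h
  linarith

theorem mink_iteratedDeriv_one_three_mbar_comp (hm : ContDiff ℝ 4 m) {κ : ℝ → ℝ}
    (harc : ∀ s, deriv m s ⬝ᵥ deriv m s = 1)
    (hκ : ∀ s, iteratedDeriv 2 m s ⬝ᵥ iteratedDeriv 2 m s = κ s ^ 2) (t : ℝ) :
    mink (iteratedDeriv 1 (fun t => mbar (m t)) t) (iteratedDeriv 3 (fun t => mbar (m t)) t)
      = -κ t ^ 2 := by
  have h := mink_iteratedDeriv_succ_add_eq_zero hm.mbar (by norm_num) (by norm_num)
    (mink_iteratedDeriv_one_two_mbar_comp hm harc) t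
  rw [mink_iteratedDeriv_mbar_comp hm two_ne_zero two_ne_zero (by norm_num) (by norm_num),
    hκ] at h
  linarith

theorem pluckerPairing_osculating_mbar_comp (hm : ContDiff ℝ 4 m) {κ : ℝ → ℝ}
    (harc : ∀ s, deriv m s ⬝ᵥ deriv m s = 1)
    (hκ : ∀ s, iteratedDeriv 2 m s ⬝ᵥ iteratedDeriv 2 m s = κ s ^ 2) (s : ℝ) :
    let F := fun t => mbar (m t)
    pluckerPairing
        (plucker (F s) (iteratedDeriv 2 F s) (iteratedDeriv 3 F s)
          + plucker (F s) (deriv F s) (iteratedDeriv 4 F s))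
        (plucker (F s) (iteratedDeriv 2 F s) (iteratedDeriv 3 F s)
          + plucker (F s) (deriv F s) (iteratedDeriv 4 F s))
      = iteratedDeriv 3 m s ⬝ᵥ iteratedDeriv 3 m s - (κ s ^ 2) ^ 2 := by
  intro F
  have step := fun (j k : ℕ) (hj : j < 4) (hk : k < 4) (c : ℝ) =>
    mink_iteratedDeriv_succ_add_eq_zero hm.mbar (j := j) (k := k) (c := c)
      (by exact_mod_cast hj) (by exact_mod_cast hk)
  have g₀₀ : ∀ t, mink (iteratedDeriv 0 F t) (iteratedDeriv 0 F t) = 0 := fun t => by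
    rw [iteratedDeriv_zero]
    exact mink_mbar_self (m t)
  have g₀₁ : ∀ t, mink (iteratedDeriv 0 F t) (iteratedDeriv 1 F t) = 0 := fun t => by
    have := step 0 0 (by norm_num) (by norm_num) 0 g₀₀ t
    rw [mink_comm] at this
    linarith
  have g₀₂ : ∀ t, mink (iteratedDeriv 0 F t) (iteratedDeriv 2 F t) = -1 := fun t => by
    have := step 0 1 (by norm_num) (by norm_num) 0 g₀₁ t
    linarith [mink_iteratedDeriv_one_one_mbar_comp hm harc t]
  have g₀₃ : ∀ t, mink (iteratedDeriv 0 F t) (iteratedDeriv 3 F t) = 0 := fun t => by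
    have := step 0 2 (by norm_num) (by norm_num) (-1) g₀₂ t
    linarith [mink_iteratedDeriv_one_two_mbar_comp hm harc t]
  have g₀₄ : ∀ t, mink (iteratedDeriv 0 F t) (iteratedDeriv 4 F t) = κ t ^ 2 := fun t => by
    have := step 0 3 (by norm_num) (by norm_num) 0 g₀₃ t
    linarith [mink_iteratedDeriv_one_three_mbar_comp hm harc hκ t]
  have h := pluckerPairing_osculating (g₀₀ s) (g₀₁ s) (g₀₂ s) (g₀₃ s) (g₀₄ s)
    (mink_iteratedDeriv_one_one_mbar_comp hm harc s)
    (mink_iteratedDeriv_one_three_mbar_comp hm harc hκ s)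
    (mink_iteratedDeriv_mbar_comp hm three_ne_zero three_ne_zero (by norm_num) (by norm_num) s)
  simpa only [iteratedDeriv_zero, iteratedDeriv_one] using h

end LightConeLift

theorem conformal_arclength_via_osculating_circles
    (m : ℝ → Fin 3 → ℝ) (κ τ : ℝ → ℝ) (hm : ContDiff ℝ 4 m)
    (harc : ∀ s, ∑ i, deriv m s i * deriv m s i = 1)
    (hκ : ∀ s, ∑ i, iteratedDeriv 2 m s i * iteratedDeriv 2 m s i = κ s ^ 2)
    (hτ : ∀ s, ∑ i, iteratedDeriv 3 m s i * iteratedDeriv 3 m s i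
        = κ s ^ 4 + (deriv κ s) ^ 2 + κ s ^ 2 * τ s ^ 2) :
    ∀ s, (∑ i₁ : Fin 5, ∑ i₂ : Fin 5, ∑ i₃ : Fin 5,
          if i₁ < i₂ ∧ i₂ < i₃ then
            (if i₁ = 0 then (1 : ℝ) else -1) *
              (iteratedDeriv 2 (fun t => gammaCoord m t i₁ i₂ i₃) s) ^ 2
          else 0)
        = (deriv κ s) ^ 2 + κ s ^ 2 * τ s ^ 2 ∧
      |(∑ i₁ : Fin 5, ∑ i₂ : Fin 5, ∑ i₃ : Fin 5,
          if i₁ < i₂ ∧ i₂ < i₃ then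
            (if i₁ = 0 then (1 : ℝ) else -1) *
              (iteratedDeriv 2 (fun t => gammaCoord m t i₁ i₂ i₃) s) ^ 2
          else 0)| ^ ((1 : ℝ) / 4)
        = ((deriv κ s) ^ 2 + κ s ^ 2 * τ s ^ 2) ^ ((1 : ℝ) / 4) := by
  intro s
  have hnorm : (∑ i₁ : Fin 5, ∑ i₂ : Fin 5, ∑ i₃ : Fin 5,
      if i₁ < i₂ ∧ i₂ < i₃ then
        (if i₁ = 0 then (1 : ℝ) else -1) *
          (iteratedDeriv 2 (fun t => gammaCoord m t i₁ i₂ i₃) s) ^ 2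
      else 0) = (deriv κ s) ^ 2 + κ s ^ 2 * τ s ^ 2 := by
    have h := pluckerPairing_osculating_mbar_comp hm harc hκ s
    simp only [pluckerPairing, Pi.add_apply, dotProduct, hτ] at h
    simp only [gammaCoord, iteratedDeriv_two_plucker_osculating hm.mbar, sq, h]
    ring
  refine ⟨hnorm, ?_⟩
  rw [hnorm, abs_of_nonneg (by positivity)]
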